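/- Let C ∈ ℕ, and for each k ∈ {0,…,C} let γ_k ∈ [0,1] and r_k > 0, and set F := ∏_{k=0}^{C} ρ(γ_k, r_k). Let i, j ∈ {0,…,C} be indices with γ_i ≤ γ_j < 1, and suppose r_i + (γ_i/(1−γ_i))·r_i² ≤ r_j + (γ_j/(1−γ_j))·r_j². Define the partial derivatives D_i := ((1−γ_i)/r_i²)·ρ(γ_i, r_i)·F and D_j := ((1−γ_j)/r_j²)·ρ(γ_j, r_j)·F (these are the derivatives at r_i, respectively r_j, of the corresponding coordinate sections of F). Then D_i ≥ D_j > 0, and moreover D_i = D_j whenever γ_i = γ_j and r_i = r_j. (Theorem 4: the acquisition function of c-TPE puts at least as much priority on the density ratio with the lower quantile.) -/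
import Mathlib


/-- The relative density ratio `ρ(γ, r) = 1/(γ + (1−γ)/r)`. -/
noncomputable def rho (γ r : ℝ) : ℝ := 1 / (γ + (1 - γ) / r)

lemma rho_denom_pos {γ r : ℝ} (h0 : 0 ≤ γ) (h1 : γ ≤ 1) (hr : 0 < r) :
    0 < γ + (1 - γ) / r := by
  have h : 0 < γ * r + (1 - γ) := by
    rcases lt_or_ge γ 1 with h|h
    · nlinarith [mul_nonneg h0 hr.le]
    · nlinarith [mul_nonneg (by linarith : (0:ℝ) ≤ γ - 1) hr.le]
  have : γ + (1 - γ) / r = (γ * r + (1 - γ)) / r := by field_simp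
  rw [this]; positivity

lemma rho_pos {γ r : ℝ} (h0 : 0 ≤ γ) (h1 : γ ≤ 1) (hr : 0 < r) :
    0 < rho γ r := by
  have := rho_denom_pos h0 h1 hr
  unfold rho; positivity

/-- Theorem 4: the acquisition function of c-TPE puts at least as much priority
on the density ratio with the lower quantile. -/
theorem ctpe_priority (C : ℕ) (γ r : Fin (C + 1) → ℝ)
    (hγ : ∀ k, γ k ∈ Set.Icc (0 : ℝ) 1) (hr : ∀ k, 0 < r k)
    (i j : Fin (C + 1)) (hij : γ i ≤ γ j) (hj : γ j < 1)
    (hineq : r i + (γ i / (1 - γ i)) * (r i) ^ 2 ≤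
      r j + (γ j / (1 - γ j)) * (r j) ^ 2)
    (F : ℝ) (hF : F = ∏ k, rho (γ k) (r k))
    (Di Dj : ℝ)
    (hDi : Di = ((1 - γ i) / (r i) ^ 2) * rho (γ i) (r i) * F)
    (hDj : Dj = ((1 - γ j) / (r j) ^ 2) * rho (γ j) (r j) * F) :
    Dj ≤ Di ∧ 0 < Dj ∧ (γ i = γ j → r i = r j → Di = Dj) := by
  have hF0 : 0 < F := by
    rw [hF]
    exact Finset.prod_pos fun k _ => rho_pos (hγ k).1 (hγ k).2 (hr k)
  have hi : γ i < 1 := lt_of_le_of_lt hij hj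
  have hi0 : 0 ≤ γ i := (hγ i).1
  have hj0 : 0 ≤ γ j := (hγ j).1
  have hri := hr i
  have hrj := hr j
  have h1i : (0:ℝ) < 1 - γ i := by linarith
  have h1j : (0:ℝ) < 1 - γ j := by linarith
  have hdi := rho_denom_pos hi0 (hγ i).2 hri
  have hdj := rho_denom_pos hj0 (hγ j).2 hrj
  set A := r i + (γ i / (1 - γ i)) * (r i) ^ 2 with hA
  set B := r j + (γ j / (1 - γ j)) * (r j) ^ 2 with hB
  have hApos : 0 < A := by
    rw [hA]
    have : 0 ≤ γ i / (1 - γ i) * (r i) ^ 2 := by positivity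
    linarith
  have hBpos : 0 < B := by
    rw [hB]
    have : 0 ≤ γ j / (1 - γ j) * (r j) ^ 2 := by positivity
    linarith
  have hDi' : Di = F / A := by
    rw [hDi, hA]
    unfold rho
    field_simp
    ring
  have hDj' : Dj = F / B := by
    rw [hDj, hB]
    unfold rho
    field_simp
    ring
  refine ⟨?_, ?_, ?_⟩
  · rw [hDi', hDj']
    exact div_le_div_of_nonneg_left hF0.le hApos hineq
  · rw [hDj']; positivity
  · intro h1 h2
    rw [hDi', hDj', hA, hB, h1, h2]
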